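/- arXiv:1503.01335 — 5 statements merged into one kernel-verified Lean document; each statement's English description precedes it below -/
import Mathlib

section
/- For every t > 0 and every Λ ∈ ℝ, the determinant of the multiplier symbols vanishes if and only if the dispersion cubic vanishes: m¹¹(t,Λ)·m²²(t,Λ) − m¹²(t,Λ)·m²¹(t,Λ) = 0 if and only if Λ³ + A(t)·Λ² + B(t)·Λ + C(t) = 0. -/
open Real Filter Asymptotics

/-- The coefficient `A(t)` of the dispersion cubic. -/
noncomputable def funA (d₁ d₂ γ₁ γ₂ t : ℝ) : ℝ :=
  -(1 / t) * (γ₂ * (t * d₂ + Real.sinh (t * d₂) * Real.cosh (t * d₁) / Real.cosh (t * (d₁ + d₂)))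
    + γ₁ * Real.sinh (t * d₁) * Real.cosh (t * d₂) / Real.cosh (t * (d₁ + d₂)))

/-- The coefficient `B(t)` of the dispersion cubic. -/
noncomputable def funB (d₁ d₂ g γ₁ γ₂ t : ℝ) : ℝ :=
  Real.tanh (t * (d₁ + d₂)) * ((γ₂ ^ 2 * d₂ - g) / t
    + γ₂ * (γ₁ - γ₂) * Real.sinh (t * d₁) * Real.sinh (t * d₂) /
        (t ^ 2 * Real.sinh (t * (d₁ + d₂))))

/-- The coefficient `C(t)` of the dispersion cubic. -/
noncomputable def funC (d₁ d₂ g γ₁ γ₂ t : ℝ) : ℝ :=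
  (g * Real.tanh (t * (d₁ + d₂)) / t ^ 2) *
    ((γ₁ - γ₂) * Real.sinh (t * d₁) * Real.sinh (t * d₂) / Real.sinh (t * (d₁ + d₂))
      + γ₂ * d₂ * t)

/-- The dispersion cubic `φ(t,Λ)`. -/
noncomputable def phi (d₁ d₂ g γ₁ γ₂ t Λ : ℝ) : ℝ :=
  Λ ^ 3 + funA d₁ d₂ γ₁ γ₂ t * Λ ^ 2 + funB d₁ d₂ g γ₁ γ₂ t * Λ + funC d₁ d₂ g γ₁ γ₂ t

/-- The multiplier symbol `m¹¹(t,Λ)`. -/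
noncomputable def m11 (d₂ γ₂ t Λ : ℝ) : ℝ := -2 * Λ * (γ₂ * d₂ - Λ) * t / Real.sinh (t * d₂)

/-- The multiplier symbol `m¹²(t,Λ)`. -/
noncomputable def m12 (d₂ g γ₂ t Λ : ℝ) : ℝ :=
  2 * (g + γ₂ * Λ - Λ ^ 2 * t / Real.tanh (t * d₂))

/-- The multiplier symbol `m²¹(t,Λ)`. -/
noncomputable def m21 (d₁ d₂ γ₁ γ₂ t Λ : ℝ) : ℝ :=
  γ₂ - γ₁ + (Λ - γ₂ * d₂) * (t / Real.tanh (t * d₁) + t / Real.tanh (t * d₂))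

/-- The multiplier symbol `m²²(t,Λ)`. -/
noncomputable def m22 (d₂ t Λ : ℝ) : ℝ := -Λ * t / Real.sinh (t * d₂)

/-! After the addition formulas for `sinh (t * (d₁ + d₂))` and `cosh (t * (d₁ + d₂))`, the
determinant and `phi` become rational functions of the four values `sinh (t * dᵢ)`,
`cosh (t * dᵢ)`. Clearing denominators, the determinant equals
`2 t² cosh (t d) / (sinh (t d₁) sinh (t d₂)) · φ(t, Λ)` modulo `cosh² − sinh² = 1`, and this
prefactor is positive for `t > 0`. -/

lemma det_symbols_eq_mul_phi {d₁ d₂ g γ₁ γ₂ t : ℝ} (Λ : ℝ) (ht : 0 < t) (hd₁ : 0 < d₁)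
    (hd₂ : 0 < d₂) :
    m11 d₂ γ₂ t Λ * m22 d₂ t Λ - m12 d₂ g γ₂ t Λ * m21 d₁ d₂ γ₁ γ₂ t Λ =
      2 * t ^ 2 * cosh (t * (d₁ + d₂)) / (sinh (t * d₁) * sinh (t * d₂)) *
        phi d₁ d₂ g γ₁ γ₂ t Λ := by
  have hs₁ : 0 < sinh (t * d₁) := sinh_pos_iff.mpr (by positivity)
  have hs₂ : 0 < sinh (t * d₂) := sinh_pos_iff.mpr (by positivity)
  have hc₁ : 0 < cosh (t * d₁) := cosh_pos _
  have hc₂ : 0 < cosh (t * d₂) := cosh_pos _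
  have hsq := cosh_sq (t * d₂)
  unfold m11 m12 m21 m22 phi funA funB funC
  simp only [tanh_eq_sinh_div_cosh]
  rw [mul_add t d₁ d₂, sinh_add, cosh_add]
  -- otherwise `field_simp` rewrites some `t * dᵢ` inside `sinh`/`cosh` to `dᵢ * t`
  generalize sinh (t * d₁) = s₁ at *
  generalize sinh (t * d₂) = s₂ at *
  generalize cosh (t * d₁) = c₁ at *
  generalize cosh (t * d₂) = c₂ at *
  field_simp
  linear_combination (Λ ^ 2 * t ^ 2 * s₁ * (Λ - γ₂ * d₂)) * hsq

theorem det_symbols_eq_zero_iff_dispersion_general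
    (d₁ d₂ g γ₁ γ₂ : ℝ) (hd₁ : 0 < d₁) (hd₂ : 0 < d₂) :
    ∀ t > (0 : ℝ), ∀ Λ : ℝ,
      m11 d₂ γ₂ t Λ * m22 d₂ t Λ - m12 d₂ g γ₂ t Λ * m21 d₁ d₂ γ₁ γ₂ t Λ = 0 ↔
        phi d₁ d₂ g γ₁ γ₂ t Λ = 0 := by
  intro t ht Λ
  have hs₁ : 0 < sinh (t * d₁) := sinh_pos_iff.mpr (by positivity)
  have hs₂ : 0 < sinh (t * d₂) := sinh_pos_iff.mpr (by positivity)
  rw [det_symbols_eq_mul_phi Λ ht hd₁ hd₂, mul_eq_zero, or_iff_right (by positivity)]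

/-- the determinant of the multiplier symbols vanishes iff the
dispersion cubic vanishes. -/
theorem det_symbols_eq_zero_iff_dispersion
    (d₁ d₂ g γ₁ γ₂ : ℝ) (hd₁ : 0 < d₁) (hd₂ : 0 < d₂) (hg : 0 < g) :
    ∀ t > (0 : ℝ), ∀ Λ : ℝ,
      m11 d₂ γ₂ t Λ * m22 d₂ t Λ - m12 d₂ g γ₂ t Λ * m21 d₁ d₂ γ₁ γ₂ t Λ = 0 ↔
        phi d₁ d₂ g γ₁ γ₂ t Λ = 0 :=
  det_symbols_eq_zero_iff_dispersion_general d₁ d₂ g γ₁ γ₂ hd₁ hd₂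
end

section
/- Assume γ₂ > 0 and γ₁ ≠ γ₂. Then there exist t₀ > 0 and functions Λ₁, Λ₂, Λ₃ : [t₀,∞) → ℝ such that for every t ≥ t₀: Λ₃(t) < Λ₂(t) < Λ₁(t) are precisely the three real roots of the cubic φ(t,·) (i.e. φ(t,Λ) = (Λ − Λ₁(t))(Λ − Λ₂(t))(Λ − Λ₃(t)) for all Λ ∈ ℝ), Λ₂(t) > 0 > Λ₃(t), and moreover Λ₁(t) → γ₂d₂, Λ₂(t) → 0, and Λ₃(t) → 0 as t → ∞. -/
open Real Filter Asymptotics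

/-!
As `t → ∞` the sinh/cosh ratios occurring in `A`, `B`, `C` stay in `[0, 1]`, so
`A(t) → -γ₂d₂`, `B(t) → 0`, `C(t) → 0`, while `C(t) > 0` for large `t` because its
`γ₂d₂ t` term dominates. Hence `φ(t, ·)` converges to `Λ²(Λ - γ₂d₂)`, and the sign pattern
`φ(t,-ε) < 0 < φ(t,0)`, `φ(t,ε) < 0`, `φ(t,γ₂d₂ - ε) < 0 < φ(t,γ₂d₂ + ε)` gives a root in
each of `(-ε, 0)`, `(0, ε)`, `(γ₂d₂ - ε, γ₂d₂ + ε)`. A cubic has no further roots, so the roots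
found for `ε = γ₂d₂/2` are, for large `t`, the ones found for any smaller `ε`.
-/

open Set Topology

lemma cubic_eq_mul_of_roots {K : Type*} [CommRing K] [IsDomain K] {a b c r₁ r₂ r₃ : K}
    (h₁₂ : r₁ ≠ r₂) (h₁₃ : r₁ ≠ r₃) (h₂₃ : r₂ ≠ r₃)
    (e₁ : r₁ ^ 3 + a * r₁ ^ 2 + b * r₁ + c = 0) (e₂ : r₂ ^ 3 + a * r₂ ^ 2 + b * r₂ + c = 0)
    (e₃ : r₃ ^ 3 + a * r₃ ^ 2 + b * r₃ + c = 0) (x : K) :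
    x ^ 3 + a * x ^ 2 + b * x + c = (x - r₁) * (x - r₂) * (x - r₃) := by
  have e₁₂ : r₁ ^ 2 + r₁ * r₂ + r₂ ^ 2 + a * (r₁ + r₂) + b = 0 :=
    mul_left_cancel₀ (sub_ne_zero.2 h₁₂) (by linear_combination e₁ - e₂)
  have e₁₃ : r₁ ^ 2 + r₁ * r₃ + r₃ ^ 2 + a * (r₁ + r₃) + b = 0 :=
    mul_left_cancel₀ (sub_ne_zero.2 h₁₃) (by linear_combination e₁ - e₃)
  have ha : a + (r₁ + r₂ + r₃) = 0 :=
    mul_left_cancel₀ (sub_ne_zero.2 h₂₃) (by linear_combination e₁₂ - e₁₃)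
  linear_combination e₁ + (x ^ 2 - r₁ ^ 2 - (x - r₁) * (r₁ + r₂)) * ha + (x - r₁) * e₁₂

section RootsNearDoubleZero

variable {ι : Type*} {l : Filter ι} {a b c : ι → ℝ} {κ : ℝ}

lemma tendsto_cubic (ha : Tendsto a l (𝓝 (-κ))) (hb : Tendsto b l (𝓝 0))
    (hc : Tendsto c l (𝓝 0)) (x : ℝ) :
    Tendsto (fun i => x ^ 3 + a i * x ^ 2 + b i * x + c i) l (𝓝 (x ^ 2 * (x - κ))) := by
  convert ((tendsto_const_nhds.add (ha.mul_const (x ^ 2))).add (hb.mul_const x)).add hc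
    using 2
  ring

lemma eventually_exists_roots_mem_Ioo (hκ : 0 < κ) (ha : Tendsto a l (𝓝 (-κ)))
    (hb : Tendsto b l (𝓝 0)) (hc : Tendsto c l (𝓝 0)) (hc_pos : ∀ᶠ i in l, 0 < c i)
    {ε : ℝ} (hε : 0 < ε) (hεκ : ε < κ) :
    ∀ᶠ i in l, ∃ r₁ ∈ Ioo (κ - ε) (κ + ε), ∃ r₂ ∈ Ioo 0 ε, ∃ r₃ ∈ Ioo (-ε) 0,
      r₁ ^ 3 + a i * r₁ ^ 2 + b i * r₁ + c i = 0 ∧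
      r₂ ^ 3 + a i * r₂ ^ 2 + b i * r₂ + c i = 0 ∧
      r₃ ^ 3 + a i * r₃ ^ 2 + b i * r₃ + c i = 0 := by
  have hlim := tendsto_cubic ha hb hc
  filter_upwards [hc_pos,
    (hlim (-ε)).eventually_lt_const
      (mul_neg_of_pos_of_neg (by simpa using pow_pos hε 2) (by linarith)),
    (hlim ε).eventually_lt_const (mul_neg_of_pos_of_neg (by positivity) (by linarith)),
    (hlim (κ - ε)).eventually_lt_const
      (mul_neg_of_pos_of_neg (pow_pos (sub_pos.2 hεκ) 2) (by linarith)),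
    (hlim (κ + ε)).eventually_const_lt (mul_pos (by positivity) (by linarith))]
    with i hc₀ hneg hpos hbelow habove
  have hcont : Continuous fun x => x ^ 3 + a i * x ^ 2 + b i * x + c i := by fun_prop
  have hzero : 0 < (0 : ℝ) ^ 3 + a i * 0 ^ 2 + b i * 0 + c i := by simpa using hc₀
  obtain ⟨r₁, hr₁, e₁⟩ := intermediate_value_Ioo (by linarith) hcont.continuousOn
    ⟨hbelow, habove⟩
  obtain ⟨r₂, hr₂, e₂⟩ := intermediate_value_Ioo' hε.le hcont.continuousOn
    ⟨hpos, hzero⟩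
  obtain ⟨r₃, hr₃, e₃⟩ := intermediate_value_Ioo (by linarith) hcont.continuousOn
    ⟨hneg, hzero⟩
  exact ⟨r₁, hr₁, r₂, hr₂, r₃, hr₃, e₁, e₂, e₃⟩

end RootsNearDoubleZero

theorem exists_three_roots_of_tendsto {a b c : ℝ → ℝ} {κ : ℝ} (hκ : 0 < κ)
    (ha : Tendsto a atTop (𝓝 (-κ))) (hb : Tendsto b atTop (𝓝 0))
    (hc : Tendsto c atTop (𝓝 0)) (hc_pos : ∀ᶠ t in atTop, 0 < c t) :
    ∃ t₀ > (0 : ℝ), ∃ Λ₁ Λ₂ Λ₃ : ℝ → ℝ,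
      (∀ t ≥ t₀,
        Λ₃ t < Λ₂ t ∧ Λ₂ t < Λ₁ t ∧ 0 < Λ₂ t ∧ Λ₃ t < 0 ∧
        ∀ x : ℝ, x ^ 3 + a t * x ^ 2 + b t * x + c t = (x - Λ₁ t) * (x - Λ₂ t) * (x - Λ₃ t)) ∧
      Tendsto Λ₁ atTop (𝓝 κ) ∧ Tendsto Λ₂ atTop (𝓝 0) ∧ Tendsto Λ₃ atTop (𝓝 0) := by
  have hroots {ε : ℝ} (hε : 0 < ε) (hεκ : ε < κ) :=
    eventually_exists_roots_mem_Ioo hκ ha hb hc hc_pos hε hεκ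
  obtain ⟨t₁, ht₁⟩ := eventually_atTop.1 (hroots (half_pos hκ) (half_lt_self hκ))
  choose! Λ₁ hΛ₁ Λ₂ hΛ₂ Λ₃ hΛ₃ e₁ e₂ e₃ using ht₁
  have horder : ∀ t ≥ t₁, Λ₃ t < 0 ∧ 0 < Λ₂ t ∧ Λ₂ t < κ / 2 ∧ κ / 2 < Λ₁ t := fun t ht =>
    ⟨(hΛ₃ t ht).2, (hΛ₂ t ht).1, (hΛ₂ t ht).2, by linarith [(hΛ₁ t ht).1]⟩
  have hfactor : ∀ t ≥ t₁, ∀ x : ℝ,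
      x ^ 3 + a t * x ^ 2 + b t * x + c t = (x - Λ₁ t) * (x - Λ₂ t) * (x - Λ₃ t) := by
    intro t ht
    obtain ⟨hΛ₃, hΛ₂, hΛ₂', hΛ₁⟩ := horder t ht
    exact cubic_eq_mul_of_roots (by linarith) (by linarith) (by linarith)
      (e₁ t ht) (e₂ t ht) (e₃ t ht)
  have hnear : ∀ ε > 0, ∀ᶠ t in atTop, |Λ₁ t - κ| < ε ∧ |Λ₂ t| < ε ∧ |Λ₃ t| < ε := by
    intro ε hε
    have hδ : 0 < min ε (κ / 2) := lt_min hε (half_pos hκ)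
    have hδε : min ε (κ / 2) ≤ ε := min_le_left _ _
    have hδκ : min ε (κ / 2) ≤ κ / 2 := min_le_right _ _
    filter_upwards [eventually_ge_atTop t₁, hroots hδ (by linarith)] with t ht
      ⟨s₁, ⟨hs₁, hs₁'⟩, s₂, ⟨hs₂, hs₂'⟩, s₃, ⟨hs₃, hs₃'⟩, f₁, f₂, f₃⟩
    obtain ⟨hΛ₃, hΛ₂, hΛ₂', hΛ₁⟩ := horder t ht
    have hmem : ∀ s : ℝ, s ^ 3 + a t * s ^ 2 + b t * s + c t = 0 →
        s = Λ₁ t ∨ s = Λ₂ t ∨ s = Λ₃ t := fun s hs => by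
      simpa only [hfactor t ht, mul_eq_zero, sub_eq_zero, or_assoc] using hs
    obtain rfl : s₁ = Λ₁ t := by rcases hmem s₁ f₁ with h | h | h <;> linarith
    obtain rfl : s₂ = Λ₂ t := by rcases hmem s₂ f₂ with h | h | h <;> linarith
    obtain rfl : s₃ = Λ₃ t := by rcases hmem s₃ f₃ with h | h | h <;> linarith
    refine ⟨abs_lt.2 ⟨?_, ?_⟩, abs_lt.2 ⟨?_, ?_⟩, abs_lt.2 ⟨?_, ?_⟩⟩ <;> linarith
  refine ⟨max t₁ 1, by positivity, Λ₁, Λ₂, Λ₃, fun t ht => ?_, ?_, ?_, ?_⟩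
  · have ht₁ : t ≥ t₁ := le_trans (le_max_left _ _) ht
    obtain ⟨hΛ₃, hΛ₂, hΛ₂', hΛ₁⟩ := horder t ht₁
    exact ⟨by linarith, by linarith, hΛ₂, hΛ₃, hfactor t ht₁⟩
  all_goals refine Metric.tendsto_nhds.2 fun ε hε => (hnear ε hε).mono fun t ht => ?_
  · simpa only [Real.dist_eq] using ht.1
  · simpa only [Real.dist_eq, sub_zero] using ht.2.1
  · simpa only [Real.dist_eq, sub_zero] using ht.2.2

lemma sinh_mul_cosh_div_cosh_add_mem_Icc {x y : ℝ} (hx : 0 ≤ x) (hy : 0 ≤ y) :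
    sinh x * cosh y / cosh (x + y) ∈ Icc (0 : ℝ) 1 := by
  have hxy := cosh_pos (x + y)
  refine ⟨div_nonneg (mul_nonneg (sinh_nonneg_iff.2 hx) (cosh_pos y).le) hxy.le, ?_⟩
  rw [div_le_one hxy, cosh_add]
  nlinarith [sinh_lt_cosh x, cosh_pos y, sinh_nonneg_iff.2 hx, sinh_nonneg_iff.2 hy]

lemma sinh_mul_sinh_div_sinh_add_mem_Icc {x y : ℝ} (hx : 0 < x) (hy : 0 < y) :
    sinh x * sinh y / sinh (x + y) ∈ Icc (0 : ℝ) 1 := by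
  have hxy : 0 < sinh (x + y) := sinh_pos_iff.2 (add_pos hx hy)
  refine ⟨div_nonneg (mul_nonneg (sinh_pos_iff.2 hx).le (sinh_pos_iff.2 hy).le) hxy.le, ?_⟩
  rw [div_le_one hxy, sinh_add]
  nlinarith [sinh_lt_cosh y, cosh_pos x, sinh_pos_iff.2 hx, sinh_pos_iff.2 hy]

lemma isBigO_one_of_eventually_mem_Icc {α : Type*} {l : Filter α} {f : α → ℝ} {m M : ℝ}
    (h : ∀ᶠ x in l, f x ∈ Icc m M) : f =O[l] (fun _ => (1 : ℝ)) :=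
  IsBigO.of_bound (max |m| |M|) <| h.mono fun _ hx => by
    simpa using abs_le_max_abs_abs hx.1 hx.2

lemma tendsto_mul_inv_of_isBigO_one {f : ℝ → ℝ} (hf : f =O[atTop] (fun _ => (1 : ℝ))) :
    Tendsto (fun t => f t * t⁻¹) atTop (𝓝 0) := by
  have h : (fun t => f t * t⁻¹) =O[atTop] (fun t => t⁻¹) := by
    simpa using hf.mul (isBigO_refl (fun t : ℝ => t⁻¹) atTop)
  exact h.trans_tendsto tendsto_inv_atTop_zero

section DispersionCoefficients

variable {d₁ d₂ g γ₁ γ₂ : ℝ}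

lemma sinh_mul_cosh_div_cosh_isBigO_one (hd₁ : 0 ≤ d₁) (hd₂ : 0 ≤ d₂) :
    (fun t => sinh (t * d₁) * cosh (t * d₂) / cosh (t * (d₁ + d₂))) =O[atTop]
      (fun _ => (1 : ℝ)) :=
  isBigO_one_of_eventually_mem_Icc <| (eventually_ge_atTop 0).mono fun t ht => by
    simpa only [mul_add] using
      sinh_mul_cosh_div_cosh_add_mem_Icc (mul_nonneg ht hd₁) (mul_nonneg ht hd₂)

lemma tendsto_sinh_mul_sinh_div_sinh_mul_inv (hd₁ : 0 < d₁) (hd₂ : 0 < d₂) :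
    Tendsto (fun t => sinh (t * d₁) * sinh (t * d₂) / sinh (t * (d₁ + d₂)) * t⁻¹) atTop
      (𝓝 0) :=
  tendsto_mul_inv_of_isBigO_one <| isBigO_one_of_eventually_mem_Icc <|
    (eventually_gt_atTop 0).mono fun t ht => by
      simpa only [mul_add] using
        sinh_mul_sinh_div_sinh_add_mem_Icc (mul_pos ht hd₁) (mul_pos ht hd₂)

lemma tanh_comp_isBigO_one {α : Type*} {l : Filter α} (f : α → ℝ) :
    (fun x => tanh (f x)) =O[l] (fun _ => (1 : ℝ)) :=
  isBigO_one_of_eventually_mem_Icc <| .of_forall fun _ =>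
    ⟨(neg_one_lt_tanh _).le, (tanh_lt_one _).le⟩

theorem tendsto_funA (hd₁ : 0 < d₁) (hd₂ : 0 < d₂) :
    Tendsto (funA d₁ d₂ γ₁ γ₂) atTop (𝓝 (-(γ₂ * d₂))) := by
  have hbdd := ((sinh_mul_cosh_div_cosh_isBigO_one hd₂.le hd₁.le).const_mul_left γ₂).add
    ((sinh_mul_cosh_div_cosh_isBigO_one hd₁.le hd₂.le).const_mul_left γ₁)
  have h := (tendsto_const_nhds (x := -(γ₂ * d₂))).sub (tendsto_mul_inv_of_isBigO_one hbdd)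
  rw [sub_zero] at h
  refine h.congr' ((eventually_ne_atTop 0).mono fun t ht => ?_)
  simp only [funA, add_comm d₂ d₁]
  field_simp
  ring

theorem tendsto_funB (hd₁ : 0 < d₁) (hd₂ : 0 < d₂) :
    Tendsto (funB d₁ d₂ g γ₁ γ₂) atTop (𝓝 0) := by
  have hfactor := ((tendsto_sinh_mul_sinh_div_sinh_mul_inv hd₁ hd₂).const_mul
    (γ₂ * (γ₁ - γ₂))).const_add (γ₂ ^ 2 * d₂ - g)
  have hbdd := (tanh_comp_isBigO_one (fun t => t * (d₁ + d₂))).mul (hfactor.isBigO_one ℝ)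
  refine (tendsto_mul_inv_of_isBigO_one (by simpa only [mul_one] using hbdd)).congr'
    ((eventually_ne_atTop 0).mono fun t ht => ?_)
  simp only [funB]
  field_simp

lemma funC_eq_mul_inv {t : ℝ} (ht : t ≠ 0) :
    funC d₁ d₂ g γ₁ γ₂ t = g * tanh (t * (d₁ + d₂)) *
      ((γ₁ - γ₂) * (sinh (t * d₁) * sinh (t * d₂) / sinh (t * (d₁ + d₂)) * t⁻¹) + γ₂ * d₂) *
        t⁻¹ := by
  simp only [funC]
  field_simp

theorem tendsto_funC (hd₁ : 0 < d₁) (hd₂ : 0 < d₂) :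
    Tendsto (funC d₁ d₂ g γ₁ γ₂) atTop (𝓝 0) := by
  have hfactor := ((tendsto_sinh_mul_sinh_div_sinh_mul_inv hd₁ hd₂).const_mul
    (γ₁ - γ₂)).add_const (γ₂ * d₂)
  have hbdd := ((tanh_comp_isBigO_one (fun t => t * (d₁ + d₂))).const_mul_left g).mul
    (hfactor.isBigO_one ℝ)
  refine (tendsto_mul_inv_of_isBigO_one (by simpa only [mul_one] using hbdd)).congr'
    ((eventually_ne_atTop 0).mono fun t ht => (funC_eq_mul_inv ht).symm)

theorem eventually_funC_pos (hd₁ : 0 < d₁) (hd₂ : 0 < d₂) (hg : 0 < g) (hγ₂ : 0 < γ₂) :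
    ∀ᶠ t in atTop, 0 < funC d₁ d₂ g γ₁ γ₂ t := by
  have hfactor := ((tendsto_sinh_mul_sinh_div_sinh_mul_inv hd₁ hd₂).const_mul
    (γ₁ - γ₂)).add_const (γ₂ * d₂)
  rw [mul_zero, zero_add] at hfactor
  filter_upwards [eventually_gt_atTop 0, hfactor.eventually_const_lt (mul_pos hγ₂ hd₂)]
    with t ht hpos
  rw [funC_eq_mul_inv ht.ne']
  have : 0 < tanh (t * (d₁ + d₂)) := by
    rw [tanh_eq_sinh_div_cosh]
    exact div_pos (sinh_pos_iff.2 (by positivity)) (cosh_pos _)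
  positivity

end DispersionCoefficients

theorem three_roots_of_dispersion_general
    (d₁ d₂ g γ₁ γ₂ : ℝ) (hd₁ : 0 < d₁) (hd₂ : 0 < d₂) (hg : 0 < g)
    (hγ₂ : 0 < γ₂) :
    ∃ t₀ > (0 : ℝ), ∃ Λ₁ Λ₂ Λ₃ : ℝ → ℝ,
      (∀ t ≥ t₀,
        Λ₃ t < Λ₂ t ∧ Λ₂ t < Λ₁ t ∧ 0 < Λ₂ t ∧ Λ₃ t < 0 ∧
        ∀ Λ : ℝ, phi d₁ d₂ g γ₁ γ₂ t Λ = (Λ - Λ₁ t) * (Λ - Λ₂ t) * (Λ - Λ₃ t)) ∧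
      Tendsto Λ₁ atTop (nhds (γ₂ * d₂)) ∧
      Tendsto Λ₂ atTop (nhds 0) ∧
      Tendsto Λ₃ atTop (nhds 0) :=
  exists_three_roots_of_tendsto (mul_pos hγ₂ hd₂) (tendsto_funA hd₁ hd₂) (tendsto_funB hd₁ hd₂)
    (tendsto_funC hd₁ hd₂) (eventually_funC_pos hd₁ hd₂ hg hγ₂)

/-- for `γ₂ > 0`, `γ₁ ≠ γ₂`, for large `t` the dispersion cubic has
three real roots `Λ₃(t) < Λ₂(t) < Λ₁(t)` with `Λ₂ > 0 > Λ₃`,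
`Λ₁(t) → γ₂d₂` and `Λ₂(t), Λ₃(t) → 0`. -/
theorem three_roots_of_dispersion
    (d₁ d₂ g γ₁ γ₂ : ℝ) (hd₁ : 0 < d₁) (hd₂ : 0 < d₂) (hg : 0 < g)
    (hγ₂ : 0 < γ₂) (hne : γ₁ ≠ γ₂) :
    ∃ t₀ > (0 : ℝ), ∃ Λ₁ Λ₂ Λ₃ : ℝ → ℝ,
      (∀ t ≥ t₀,
        Λ₃ t < Λ₂ t ∧ Λ₂ t < Λ₁ t ∧ 0 < Λ₂ t ∧ Λ₃ t < 0 ∧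
        ∀ Λ : ℝ, phi d₁ d₂ g γ₁ γ₂ t Λ = (Λ - Λ₁ t) * (Λ - Λ₂ t) * (Λ - Λ₃ t)) ∧
      Tendsto Λ₁ atTop (nhds (γ₂ * d₂)) ∧
      Tendsto Λ₂ atTop (nhds 0) ∧
      Tendsto Λ₃ atTop (nhds 0) :=
  three_roots_of_dispersion_general d₁ d₂ g γ₁ γ₂ hd₁ hd₂ hg hγ₂
end

section
/- Assume γ₂ > 0, γ₁ ≠ γ₂, and let Λ₃(t) < Λ₂(t) < Λ₁(t) denote the three real roots of φ(t,·) for large t. Then ∂Λφ(t,Λ₁(t)) = (Λ₁(t) − Λ₂(t))·(Λ₁(t) − Λ₃(t)) > 0 for all sufficiently large t, and t²·∂tφ(t,Λ₁(t)) = t²·(A′(t)·Λ₁(t)² + B′(t)·Λ₁(t) + C′(t)) → (γ₂d₂)²·(γ₁ − γ₂)/2 as t → ∞. -/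
/-!
The first claim is the product rule: if `φ(Λ) = (Λ - Λ₁)(Λ - Λ₂)(Λ - Λ₃)` then
`∂Λφ(Λ₁) = (Λ₁ - Λ₂)(Λ₁ - Λ₃)`, which is positive since `Λ₁` is the largest root.

For the second, each coefficient is eventually of the shape `c + f(t)/t + g(t)/t²`, where `f` and
`g` are rational functions of exponentials `e^{-κt}` (`κ > 0`) with nonvanishing denominators at
infinity. Such functions converge and `t·f'(t) → 0`, so
`t²·F'(t) = t f' - f + g' - 2g/t → -lim f`. This gives `t²A' → (γ₁ + γ₂)/2`, `t²B' → g - γ₂²d₂`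
and `t²C' → -gγ₂d₂`, and `Λ₁ → γ₂d₂` yields the limit.
-/

open Real Filter Asymptotics

lemma eventually_eventuallyEq_nhds_of_eventuallyEq_atTop {α β : Type*} [TopologicalSpace α]
    [LinearOrder α] [OrderTopology α] [NoMaxOrder α] [Nonempty α] {f g : α → β}
    (h : f =ᶠ[atTop] g) : ∀ᶠ t in atTop, f =ᶠ[nhds t] g := by
  obtain ⟨N, hN⟩ := eventually_atTop.1 h
  filter_upwards [eventually_gt_atTop N] with t ht
  filter_upwards [Ioi_mem_nhds ht] with s hs using hN s hs.le

def IsFlatAtTop (f : ℝ → ℝ) (L : ℝ) : Prop :=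
  Tendsto f atTop (nhds L) ∧
    ∃ f' : ℝ → ℝ, (∀ᶠ t in atTop, HasDerivAt f (f' t) t) ∧
      Tendsto (fun t => t * f' t) atTop (nhds 0)

namespace IsFlatAtTop

variable {f g : ℝ → ℝ} {L M : ℝ}

lemma const (c : ℝ) : IsFlatAtTop (fun _ => c) c :=
  ⟨tendsto_const_nhds, fun _ => 0, Eventually.of_forall fun t => hasDerivAt_const t c, by simp⟩

lemma congr (hf : IsFlatAtTop f L) (h : f =ᶠ[atTop] g) : IsFlatAtTop g L := by
  obtain ⟨hfL, f', hf', htf'⟩ := hf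
  refine ⟨hfL.congr' h, f', ?_, htf'⟩
  filter_upwards [hf', eventually_eventuallyEq_nhds_of_eventuallyEq_atTop h] with t ht hfg
  exact ht.congr_of_eventuallyEq hfg.symm

lemma add (hf : IsFlatAtTop f L) (hg : IsFlatAtTop g M) :
    IsFlatAtTop (fun t => f t + g t) (L + M) := by
  obtain ⟨hfL, f', hf', htf'⟩ := hf
  obtain ⟨hgM, g', hg', htg'⟩ := hg
  refine ⟨hfL.add hgM, fun t => f' t + g' t, ?_, ?_⟩
  · filter_upwards [hf', hg'] with t h₁ h₂ using h₁.add h₂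
  · simpa [mul_add] using htf'.add htg'

lemma sub (hf : IsFlatAtTop f L) (hg : IsFlatAtTop g M) :
    IsFlatAtTop (fun t => f t - g t) (L - M) := by
  obtain ⟨hfL, f', hf', htf'⟩ := hf
  obtain ⟨hgM, g', hg', htg'⟩ := hg
  refine ⟨hfL.sub hgM, fun t => f' t - g' t, ?_, ?_⟩
  · filter_upwards [hf', hg'] with t h₁ h₂ using h₁.sub h₂
  · simpa [mul_sub] using htf'.sub htg'

lemma mul (hf : IsFlatAtTop f L) (hg : IsFlatAtTop g M) :
    IsFlatAtTop (fun t => f t * g t) (L * M) := by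
  obtain ⟨hfL, f', hf', htf'⟩ := hf
  obtain ⟨hgM, g', hg', htg'⟩ := hg
  refine ⟨hfL.mul hgM, fun t => f' t * g t + f t * g' t, ?_, ?_⟩
  · filter_upwards [hf', hg'] with t h₁ h₂ using h₁.mul h₂
  · simpa using ((htf'.mul hgM).add (hfL.mul htg')).congr fun t => by ring

lemma div (hf : IsFlatAtTop f L) (hg : IsFlatAtTop g M) (hM : M ≠ 0) :
    IsFlatAtTop (fun t => f t / g t) (L / M) := by
  obtain ⟨hfL, f', hf', htf'⟩ := hf
  obtain ⟨hgM, g', hg', htg'⟩ := hg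
  refine ⟨hfL.div hgM hM, fun t => (f' t * g t - f t * g' t) / g t ^ 2, ?_, ?_⟩
  · filter_upwards [hf', hg', hgM.eventually_ne hM] with t h₁ h₂ hne using h₁.div h₂ hne
  · have h := ((htf'.mul hgM).sub (hfL.mul htg')).div (hgM.pow 2) (pow_ne_zero 2 hM)
    rw [zero_mul, mul_zero, sub_zero, zero_div] at h
    exact h.congr fun t => by rw [Pi.div_apply]; ring

lemma exp_neg_mul {c : ℝ} (hc : 0 < c) : IsFlatAtTop (fun t => exp (-(c * t))) 0 := by
  have hct : Tendsto (fun t => c * t) atTop atTop := tendsto_id.const_mul_atTop hc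
  refine ⟨tendsto_exp_neg_atTop_nhds_zero.comp hct, fun t => -(exp (-(c * t)) * c),
    Eventually.of_forall fun t => ?_, ?_⟩
  · simpa using ((hasDerivAt_id t).const_mul c).neg.exp
  · simpa using ((tendsto_pow_mul_exp_neg_atTop_nhds_zero 1).comp hct).neg.congr
      fun t => by simp only [Function.comp_apply, pow_one]; ring

end IsFlatAtTop

lemma tendsto_sq_mul_deriv {F f g : ℝ → ℝ} {c L M : ℝ} (hf : IsFlatAtTop f L)
    (hg : IsFlatAtTop g M) (hF : F =ᶠ[atTop] fun t => c + f t / t + g t / t ^ 2) :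
    Tendsto (fun t => t ^ 2 * deriv F t) atTop (nhds (-L)) := by
  obtain ⟨hfL, f', hf', htf'⟩ := hf
  obtain ⟨hgM, g', hg', htg'⟩ := hg
  have hlim : Tendsto (fun t => t * f' t - f t + t * g' t * t⁻¹ - 2 * g t * t⁻¹) atTop
      (nhds (-L)) := by
    simpa using ((htf'.sub hfL).add (htg'.mul tendsto_inv_atTop_zero)).sub
      ((hgM.const_mul 2).mul tendsto_inv_atTop_zero)
  refine hlim.congr' ?_
  filter_upwards [hf', hg', eventually_eventuallyEq_nhds_of_eventuallyEq_atTop hF,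
    eventually_gt_atTop 0] with t hft hgt hFt ht
  have hderiv := (((hasDerivAt_const t c).add (hft.div (hasDerivAt_id t) ht.ne')).add
    (hgt.div (hasDerivAt_pow 2 t) (by positivity))).congr_of_eventuallyEq hFt
  rw [hderiv.deriv, id]
  field_simp
  ring

lemma exp_neg_two_mul_mul (a t : ℝ) : exp (-(2 * a * t)) = (exp (t * a))⁻¹ ^ 2 := by
  rw [← exp_neg, ← exp_nat_mul]
  ring_nf

lemma isFlatAtTop_tanh {d : ℝ} (hd : 0 < d) : IsFlatAtTop (fun t => tanh (t * d)) 1 := by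
  have hE := IsFlatAtTop.exp_neg_mul (mul_pos two_pos hd)
  have h := ((IsFlatAtTop.const 1).sub hE).div ((IsFlatAtTop.const 1).add hE) (by norm_num)
  norm_num at h
  refine h.congr (Eventually.of_forall fun t => ?_)
  have hu := exp_pos (t * d)
  dsimp only
  rw [exp_neg_two_mul_mul, tanh_eq_sinh_div_cosh, sinh_eq, cosh_eq, exp_neg]
  field_simp

lemma isFlatAtTop_sinh_mul_cosh_div_cosh {a b : ℝ} (ha : 0 < a) (hb : 0 < b) :
    IsFlatAtTop (fun t => sinh (t * a) * cosh (t * b) / cosh (t * (a + b))) (1 / 2) := by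
  have hEa := IsFlatAtTop.exp_neg_mul (mul_pos two_pos ha)
  have hEb := IsFlatAtTop.exp_neg_mul (mul_pos two_pos hb)
  have h := (((IsFlatAtTop.const 1).sub hEa).mul ((IsFlatAtTop.const 1).add hEb)).div
    ((IsFlatAtTop.const 2).mul ((IsFlatAtTop.const 1).add (hEa.mul hEb))) (by norm_num)
  norm_num at h
  refine h.congr (Eventually.of_forall fun t => ?_)
  have hu := exp_pos (t * a)
  have hv := exp_pos (t * b)
  dsimp only
  rw [exp_neg_two_mul_mul, exp_neg_two_mul_mul]
  simp only [sinh_eq, cosh_eq, exp_neg, mul_add, exp_add]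
  field_simp

lemma isFlatAtTop_sinh_mul_sinh_div_sinh {a b : ℝ} (ha : 0 < a) (hb : 0 < b) :
    IsFlatAtTop (fun t => sinh (t * a) * sinh (t * b) / sinh (t * (a + b))) (1 / 2) := by
  have hEa := IsFlatAtTop.exp_neg_mul (mul_pos two_pos ha)
  have hEb := IsFlatAtTop.exp_neg_mul (mul_pos two_pos hb)
  have h := (((IsFlatAtTop.const 1).sub hEa).mul ((IsFlatAtTop.const 1).sub hEb)).div
    ((IsFlatAtTop.const 2).mul ((IsFlatAtTop.const 1).sub (hEa.mul hEb))) (by norm_num)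
  norm_num at h
  refine h.congr ?_
  filter_upwards [eventually_gt_atTop 0] with t ht
  have hu : 1 < exp (t * a) := one_lt_exp_iff.2 (by positivity)
  have hv : 1 < exp (t * b) := one_lt_exp_iff.2 (by positivity)
  have huv : exp (t * a) ^ 2 * exp (t * b) ^ 2 - 1 ≠ 0 :=
    (sub_pos.2 (one_lt_mul_of_lt_of_le (one_lt_pow₀ hu two_ne_zero)
      (one_le_pow₀ hv.le))).ne'
  rw [exp_neg_two_mul_mul, exp_neg_two_mul_mul]
  simp only [sinh_eq, exp_neg, mul_add, exp_add]
  field_simp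

section Coefficients

variable {d₁ d₂ : ℝ} (g γ₁ γ₂ : ℝ)

lemma tendsto_sq_mul_deriv_funA (hd₁ : 0 < d₁) (hd₂ : 0 < d₂) :
    Tendsto (fun t => t ^ 2 * deriv (funA d₁ d₂ γ₁ γ₂) t) atTop (nhds ((γ₁ + γ₂) / 2)) := by
  have hW := ((IsFlatAtTop.const (-γ₂)).mul (isFlatAtTop_sinh_mul_cosh_div_cosh hd₂ hd₁)).add
    ((IsFlatAtTop.const (-γ₁)).mul (isFlatAtTop_sinh_mul_cosh_div_cosh hd₁ hd₂))
  convert tendsto_sq_mul_deriv (c := -(γ₂ * d₂)) hW (IsFlatAtTop.const 0) ?_ using 2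
  · ring
  · filter_upwards [eventually_ne_atTop 0] with t ht
    rw [funA, add_comm d₂ d₁]
    field_simp
    ring

lemma tendsto_sq_mul_deriv_funB (hd₁ : 0 < d₁) (hd₂ : 0 < d₂) :
    Tendsto (fun t => t ^ 2 * deriv (funB d₁ d₂ g γ₁ γ₂) t) atTop (nhds (g - γ₂ ^ 2 * d₂)) := by
  have hT := isFlatAtTop_tanh (add_pos hd₁ hd₂)
  have hTR := hT.mul (isFlatAtTop_sinh_mul_sinh_div_sinh hd₁ hd₂)
  convert tendsto_sq_mul_deriv (c := 0) ((IsFlatAtTop.const (γ₂ ^ 2 * d₂ - g)).mul hT)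
    ((IsFlatAtTop.const (γ₂ * (γ₁ - γ₂))).mul hTR) ?_ using 2
  · ring
  · refine Eventually.of_forall fun t => ?_
    rw [funB]
    ring

lemma tendsto_sq_mul_deriv_funC (hd₁ : 0 < d₁) (hd₂ : 0 < d₂) :
    Tendsto (fun t => t ^ 2 * deriv (funC d₁ d₂ g γ₁ γ₂) t) atTop (nhds (-(g * (γ₂ * d₂)))) := by
  have hT := isFlatAtTop_tanh (add_pos hd₁ hd₂)
  have hTR := hT.mul (isFlatAtTop_sinh_mul_sinh_div_sinh hd₁ hd₂)
  convert tendsto_sq_mul_deriv (c := 0) ((IsFlatAtTop.const (g * (γ₂ * d₂))).mul hT)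
    ((IsFlatAtTop.const (g * (γ₁ - γ₂))).mul hTR) ?_ using 2
  · ring
  · filter_upwards [eventually_ne_atTop 0] with t ht
    rw [funC]
    field_simp
    ring

end Coefficients

lemma cubic_deriv_eq_mul_sub_of_factorization {A B C a b c : ℝ}
    (h : ∀ x : ℝ, x ^ 3 + A * x ^ 2 + B * x + C = (x - a) * (x - b) * (x - c)) :
    3 * a ^ 2 + 2 * A * a + B = (a - b) * (a - c) := by
  linear_combination (-2 * a) * h 0 + (a + 1 / 2) * h 1 + (a - 1 / 2) * h (-1)

theorem partial_derivatives_at_largest_root_general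
    (d₁ d₂ g γ₁ γ₂ : ℝ) (hd₁ : 0 < d₁) (hd₂ : 0 < d₂) (Λ₁ Λ₂ Λ₃ : ℝ → ℝ)
    (hroots : ∀ᶠ t in atTop,
      Λ₃ t < Λ₂ t ∧ Λ₂ t < Λ₁ t ∧
      ∀ Λ : ℝ, phi d₁ d₂ g γ₁ γ₂ t Λ = (Λ - Λ₁ t) * (Λ - Λ₂ t) * (Λ - Λ₃ t))
    (hlim1 : Tendsto Λ₁ atTop (nhds (γ₂ * d₂))) :
    (∀ᶠ t in atTop,
      3 * Λ₁ t ^ 2 + 2 * funA d₁ d₂ γ₁ γ₂ t * Λ₁ t + funB d₁ d₂ g γ₁ γ₂ t =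
        (Λ₁ t - Λ₂ t) * (Λ₁ t - Λ₃ t) ∧
      0 < (Λ₁ t - Λ₂ t) * (Λ₁ t - Λ₃ t)) ∧
    Tendsto (fun t : ℝ =>
        t ^ 2 * (deriv (funA d₁ d₂ γ₁ γ₂) t * Λ₁ t ^ 2
          + deriv (funB d₁ d₂ g γ₁ γ₂) t * Λ₁ t + deriv (funC d₁ d₂ g γ₁ γ₂) t))
      atTop (nhds ((γ₂ * d₂) ^ 2 * (γ₁ - γ₂) / 2)) := by
  refine ⟨?_, ?_⟩
  · filter_upwards [hroots] with t ⟨h₃₂, h₂₁, hφ⟩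
    exact ⟨cubic_deriv_eq_mul_sub_of_factorization hφ, mul_pos (by linarith) (by linarith)⟩
  · have h := ((tendsto_sq_mul_deriv_funA γ₁ γ₂ hd₁ hd₂).mul (hlim1.pow 2)).add
      ((tendsto_sq_mul_deriv_funB g γ₁ γ₂ hd₁ hd₂).mul hlim1) |>.add
      (tendsto_sq_mul_deriv_funC g γ₁ γ₂ hd₁ hd₂)
    rw [show (γ₂ * d₂) ^ 2 * (γ₁ - γ₂) / 2 = (γ₁ + γ₂) / 2 * (γ₂ * d₂) ^ 2
      + (g - γ₂ ^ 2 * d₂) * (γ₂ * d₂) + -(g * (γ₂ * d₂)) by ring]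
    exact h.congr fun t => by ring

/-- at the largest root `Λ₁`, `∂Λφ(t,Λ₁(t)) = (Λ₁−Λ₂)(Λ₁−Λ₃) > 0`
eventually, and `t²·∂tφ(t,Λ₁(t)) → (γ₂d₂)²(γ₁−γ₂)/2`. -/
theorem partial_derivatives_at_largest_root
    (d₁ d₂ g γ₁ γ₂ : ℝ) (hd₁ : 0 < d₁) (hd₂ : 0 < d₂) (hg : 0 < g)
    (hγ₂ : 0 < γ₂) (hne : γ₁ ≠ γ₂) (Λ₁ Λ₂ Λ₃ : ℝ → ℝ)
    (hroots : ∀ᶠ t in atTop,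
      Λ₃ t < Λ₂ t ∧ Λ₂ t < Λ₁ t ∧
      ∀ Λ : ℝ, phi d₁ d₂ g γ₁ γ₂ t Λ = (Λ - Λ₁ t) * (Λ - Λ₂ t) * (Λ - Λ₃ t))
    (hlim1 : Tendsto Λ₁ atTop (nhds (γ₂ * d₂)))
    (hlim2 : Tendsto Λ₂ atTop (nhds 0))
    (hlim3 : Tendsto Λ₃ atTop (nhds 0)) :
    (∀ᶠ t in atTop,
      3 * Λ₁ t ^ 2 + 2 * funA d₁ d₂ γ₁ γ₂ t * Λ₁ t + funB d₁ d₂ g γ₁ γ₂ t =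
        (Λ₁ t - Λ₂ t) * (Λ₁ t - Λ₃ t) ∧
      0 < (Λ₁ t - Λ₂ t) * (Λ₁ t - Λ₃ t)) ∧
    Tendsto (fun t : ℝ =>
        t ^ 2 * (deriv (funA d₁ d₂ γ₁ γ₂) t * Λ₁ t ^ 2
          + deriv (funB d₁ d₂ g γ₁ γ₂) t * Λ₁ t + deriv (funC d₁ d₂ g γ₁ γ₂) t))
      atTop (nhds ((γ₂ * d₂) ^ 2 * (γ₁ - γ₂) / 2)) :=
  partial_derivatives_at_largest_root_general d₁ d₂ g γ₁ γ₂ hd₁ hd₂ Λ₁ Λ₂ Λ₃ hroots hlim1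
end

section
/- Assume γ₂ > 0, γ₁ ≠ γ₂, and let Λ₂(t) denote the middle real root of φ(t,·) for large t. Then ∂Λφ(t,Λ₂(t)) < 0 for all sufficiently large t, t²·∂tφ(t,Λ₂(t)) → −g·γ₂d₂ as t → ∞, and there exists t₀ > 0 such that Λ₂ is strictly decreasing on [t₀,∞). -/
open Real Filter Asymptotics

/-!
Each coefficient of `φ` has the form `κ + u(t)/t + v(t)/t²`, where `u` and `v` are constants
plus combinations of `e^{ct}/cosh(dt)` with `c < d`. Such terms decay exponentially together
with their derivatives, so `t²A'`, `t²B'`, `t²C'` converge, the last one to `-gγ₂d₂`; this gives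
the limit of `t²∂tφ(t,Λ₂(t))` because `Λ₂ → 0`. The sign of `∂Λφ` at the middle root is that of
`(Λ₂ - Λ₁)(Λ₂ - Λ₃)`. Finally `t²∂tφ(t,x) < 0` for all large `t` and all small `x`, so for large
`s < t` we get `φ(t,Λ₂(s)) < φ(s,Λ₂(s)) = 0`, and the sign pattern of `(x - Λ₁)(x - Λ₂)(x - Λ₃)`
then forces `Λ₂(t) < Λ₂(s)`.
-/

open Topology

structure FlatLimit (u : ℝ → ℝ) (L : ℝ) : Prop where
  eventually_differentiableAt : ∀ᶠ t in atTop, DifferentiableAt ℝ u t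
  tendsto : Tendsto u atTop (𝓝 L)
  tendsto_mul_deriv : Tendsto (fun t => t * deriv u t) atTop (𝓝 0)

namespace FlatLimit

variable {u v : ℝ → ℝ} {L M : ℝ}

lemma const (c : ℝ) : FlatLimit (fun _ => c) c :=
  ⟨.of_forall fun _ => differentiableAt_const c, tendsto_const_nhds, by simp⟩

lemma add (hu : FlatLimit u L) (hv : FlatLimit v M) :
    FlatLimit (fun t => u t + v t) (L + M) where
  eventually_differentiableAt := by
    filter_upwards [hu.eventually_differentiableAt, hv.eventually_differentiableAt]
      with t hut hvt using hut.add hvt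
  tendsto := hu.tendsto.add hv.tendsto
  tendsto_mul_deriv := by
    refine (add_zero (0 : ℝ) ▸ hu.tendsto_mul_deriv.add hv.tendsto_mul_deriv).congr' ?_
    filter_upwards [hu.eventually_differentiableAt, hv.eventually_differentiableAt]
      with t hut hvt
    rw [deriv_fun_add hut hvt, mul_add]

lemma const_mul (hu : FlatLimit u L) (c : ℝ) : FlatLimit (fun t => c * u t) (c * L) where
  eventually_differentiableAt := by
    filter_upwards [hu.eventually_differentiableAt] with t hut using hut.const_mul c
  tendsto := hu.tendsto.const_mul c
  tendsto_mul_deriv := by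
    refine (mul_zero c ▸ hu.tendsto_mul_deriv.const_mul c).congr fun t => ?_
    rw [deriv_const_mul_field']
    ring

lemma congr (hu : FlatLimit u L) (huv : ∀ t, u t = v t) (hLM : L = M) : FlatLimit v M := by
  obtain rfl : u = v := funext huv
  exact hLM ▸ hu

end FlatLimit

noncomputable def expDivCosh (c d t : ℝ) : ℝ := exp (t * c) / cosh (t * d)

lemma hasDerivAt_expDivCosh (c d t : ℝ) :
    HasDerivAt (expDivCosh c d) ((c - d * tanh (t * d)) * expDivCosh c d t) t := by
  have h := (((hasDerivAt_mul_const c).exp).div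
    ((hasDerivAt_mul_const d).cosh) (cosh_pos (t * d)).ne')
  refine h.congr_deriv ?_
  rw [expDivCosh, tanh_eq_sinh_div_cosh]
  field_simp

lemma tendsto_mul_expDivCosh {c d : ℝ} (hcd : c < d) :
    Tendsto (fun t => t * expDivCosh c d t) atTop (𝓝 0) := by
  have hexp : Tendsto (fun t : ℝ => 2 * (t ^ (1 : ℝ) * exp (-(d - c) * t))) atTop (𝓝 0) := by
    simpa using (tendsto_rpow_mul_exp_neg_mul_atTop_nhds_zero 1 (d - c) (sub_pos.2 hcd)).const_mul 2
  refine squeeze_zero' ?_ ?_ hexp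
  · filter_upwards [eventually_ge_atTop 0] with t ht
    exact mul_nonneg ht (div_nonneg (exp_pos _).le (cosh_pos _).le)
  · filter_upwards [eventually_ge_atTop 0] with t ht
    have hcosh : exp (t * d) ≤ 2 * cosh (t * d) := by
      rw [cosh_eq]; linarith [exp_pos (-(t * d))]
    rw [rpow_one, expDivCosh, ← mul_assoc, mul_comm 2 t, mul_assoc,
      show -(d - c) * t = t * c - t * d by ring, exp_sub]
    gcongr
    rw [div_le_iff₀ (cosh_pos _), mul_div_assoc', div_mul_eq_mul_div, le_div_iff₀ (exp_pos _)]
    nlinarith [exp_pos (t * c)]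

lemma flatLimit_expDivCosh {c d : ℝ} (hcd : c < d) : FlatLimit (expDivCosh c d) 0 where
  eventually_differentiableAt := .of_forall fun t => (hasDerivAt_expDivCosh c d t).differentiableAt
  tendsto := by
    refine (zero_mul (0 : ℝ) ▸ (tendsto_mul_expDivCosh hcd).mul tendsto_inv_atTop_zero).congr' ?_
    filter_upwards [eventually_ne_atTop 0] with t ht
    field_simp
  tendsto_mul_deriv := by
    have hbdd : IsBoundedUnder (· ≤ ·) atTop (norm ∘ fun t => c - d * tanh (t * d)) := by
      refine isBoundedUnder_of ⟨|c| + |d|, fun t => ?_⟩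
      simp only [Function.comp_apply, Real.norm_eq_abs]
      calc |c - d * tanh (t * d)| ≤ |c| + |d| * |tanh (t * d)| := by
            rw [← abs_mul]; exact abs_sub _ _
        _ ≤ |c| + |d| := by
            gcongr; exact mul_le_of_le_one_right (abs_nonneg d) (abs_tanh_lt_one _).le
    refine ((tendsto_mul_expDivCosh hcd).zero_mul_isBoundedUnder_le hbdd).congr fun t => ?_
    rw [(hasDerivAt_expDivCosh c d t).deriv]
    ring

lemma tanh_mul_eq (d t : ℝ) : tanh (t * d) = 1 - expDivCosh (-d) d t := by
  rw [expDivCosh, tanh_eq_sinh_div_cosh, mul_neg, ← cosh_sub_sinh]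
  field_simp
  ring

lemma sinh_mul_cosh_div_cosh_eq (d₁ d₂ t : ℝ) :
    sinh (t * d₂) * cosh (t * d₁) / cosh (t * (d₁ + d₂)) = 1 / 2
      - expDivCosh (-(d₁ + d₂)) (d₁ + d₂) t / 2
      + (expDivCosh (d₂ - d₁) (d₁ + d₂) t - expDivCosh (d₁ - d₂) (d₁ + d₂) t) / 4 := by
  have := (cosh_pos (t * (d₁ + d₂))).ne'
  simp only [expDivCosh]
  field_simp
  simp only [← cosh_add_sinh, mul_sub, mul_add, cosh_neg, sinh_neg,
    cosh_add, sinh_add, cosh_sub, sinh_sub]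
  ring

lemma sinh_mul_sinh_div_cosh_eq (d₁ d₂ t : ℝ) :
    sinh (t * d₁) * sinh (t * d₂) / cosh (t * (d₁ + d₂)) = 1 / 2
      - (expDivCosh (d₁ - d₂) (d₁ + d₂) t + expDivCosh (d₂ - d₁) (d₁ + d₂) t) / 4 := by
  have := (cosh_pos (t * (d₁ + d₂))).ne'
  simp only [expDivCosh]
  field_simp
  simp only [← cosh_add_sinh, mul_sub, mul_add, cosh_add, cosh_sub, sinh_sub]
  ring

lemma flatLimit_tanh {d : ℝ} (hd : 0 < d) : FlatLimit (fun t => tanh (t * d)) 1 :=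
  ((FlatLimit.const 1).add ((flatLimit_expDivCosh (by linarith : -d < d)).const_mul (-1))).congr
    (fun t => by rw [tanh_mul_eq]; ring) (by ring)

lemma flatLimit_sinh_mul_cosh_div_cosh {d₁ d₂ : ℝ} (hd₁ : 0 < d₁) (hd₂ : 0 < d₂) :
    FlatLimit (fun t => sinh (t * d₂) * cosh (t * d₁) / cosh (t * (d₁ + d₂))) (1 / 2) :=
  (((FlatLimit.const (1 / 2)).add
      ((flatLimit_expDivCosh (by linarith : -(d₁ + d₂) < d₁ + d₂)).const_mul (-1 / 2))).add
    (((flatLimit_expDivCosh (by linarith : d₂ - d₁ < d₁ + d₂)).const_mul (1 / 4)).add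
      ((flatLimit_expDivCosh (by linarith : d₁ - d₂ < d₁ + d₂)).const_mul (-1 / 4)))).congr
    (fun t => by rw [sinh_mul_cosh_div_cosh_eq]; ring) (by ring)

lemma flatLimit_sinh_mul_sinh_div_cosh {d₁ d₂ : ℝ} (hd₁ : 0 < d₁) (hd₂ : 0 < d₂) :
    FlatLimit (fun t => sinh (t * d₁) * sinh (t * d₂) / cosh (t * (d₁ + d₂))) (1 / 2) :=
  ((FlatLimit.const (1 / 2)).add
    (((flatLimit_expDivCosh (by linarith : d₁ - d₂ < d₁ + d₂)).const_mul (-1 / 4)).add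
      ((flatLimit_expDivCosh (by linarith : d₂ - d₁ < d₁ + d₂)).const_mul (-1 / 4)))).congr
    (fun t => by rw [sinh_mul_sinh_div_cosh_eq]; ring) (by ring)

lemma hasDerivAt_const_add_div_add_div_sq {u v : ℝ → ℝ} {u' v' t : ℝ} (κ : ℝ)
    (hu : HasDerivAt u u' t) (hv : HasDerivAt v v' t) (ht : t ≠ 0) :
    HasDerivAt (fun s => κ + u s / s + v s / s ^ 2)
      (u' / t - u t / t ^ 2 + v' / t ^ 2 - 2 * v t / t ^ 3) t := by
  have h := ((hu.fun_div (hasDerivAt_id' t) ht).fun_add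
    (hv.fun_div (hasDerivAt_pow 2 t) (pow_ne_zero 2 ht))).const_add κ
  refine (h.congr_deriv ?_).congr_of_eventuallyEq (.of_forall fun s => add_assoc _ _ _)
  field_simp
  ring

lemma eventually_eventually_nhds_of_atTop {p : ℝ → Prop} (h : ∀ᶠ t in atTop, p t) :
    ∀ᶠ t in atTop, ∀ᶠ s in 𝓝 t, p s := by
  obtain ⟨T, hT⟩ := eventually_atTop.1 h
  filter_upwards [eventually_gt_atTop T] with t ht
  filter_upwards [Ioi_mem_nhds ht] with s hs using hT s (le_of_lt hs)

section ConstAddDivAddDivSq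

variable {f u v : ℝ → ℝ} {κ L M : ℝ}

lemma eventually_hasDerivAt_of_eventually_eq (hu : ∀ᶠ t in atTop, DifferentiableAt ℝ u t)
    (hv : ∀ᶠ t in atTop, DifferentiableAt ℝ v t)
    (hf : ∀ᶠ t in atTop, f t = κ + u t / t + v t / t ^ 2) :
    ∀ᶠ t in atTop, HasDerivAt f
      (deriv u t / t - u t / t ^ 2 + deriv v t / t ^ 2 - 2 * v t / t ^ 3) t := by
  filter_upwards [hu, hv, eventually_eventually_nhds_of_atTop hf, eventually_ne_atTop 0]
    with t hut hvt hft ht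
  exact (hasDerivAt_const_add_div_add_div_sq κ hut.hasDerivAt hvt.hasDerivAt ht)
    |>.congr_of_eventuallyEq hft

lemma tendsto_sq_mul_deriv_of_eventually_eq (hu : FlatLimit u L) (hv : FlatLimit v M)
    (hf : ∀ᶠ t in atTop, f t = κ + u t / t + v t / t ^ 2) :
    Tendsto (fun t => t ^ 2 * deriv f t) atTop (𝓝 (-L)) := by
  have H := ((hu.tendsto_mul_deriv.sub hu.tendsto).add
    (hv.tendsto_mul_deriv.mul tendsto_inv_atTop_zero)).sub
      ((hv.tendsto.mul tendsto_inv_atTop_zero).const_mul 2)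
  rw [show -L = 0 - L + 0 * 0 - 2 * (M * 0) by ring]
  refine H.congr' ?_
  filter_upwards [eventually_hasDerivAt_of_eventually_eq hu.eventually_differentiableAt
    hv.eventually_differentiableAt hf, eventually_ne_atTop 0]
    with t hft ht
  rw [hft.deriv]
  field_simp

end ConstAddDivAddDivSq

def HasFlatExpansion (f : ℝ → ℝ) (L : ℝ) : Prop :=
  ∃ (κ M : ℝ) (u v : ℝ → ℝ), FlatLimit u L ∧ FlatLimit v M ∧
    ∀ᶠ t in atTop, f t = κ + u t / t + v t / t ^ 2

namespace HasFlatExpansion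

variable {f : ℝ → ℝ} {L : ℝ}

lemma eventually_differentiableAt (hf : HasFlatExpansion f L) :
    ∀ᶠ t in atTop, DifferentiableAt ℝ f t := by
  obtain ⟨κ, M, u, v, hu, hv, hfuv⟩ := hf
  filter_upwards [eventually_hasDerivAt_of_eventually_eq hu.eventually_differentiableAt
    hv.eventually_differentiableAt hfuv] with t ht
  exact ht.differentiableAt

lemma tendsto_sq_mul_deriv (hf : HasFlatExpansion f L) :
    Tendsto (fun t => t ^ 2 * deriv f t) atTop (𝓝 (-L)) := by
  obtain ⟨κ, M, u, v, hu, hv, hfuv⟩ := hf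
  exact tendsto_sq_mul_deriv_of_eventually_eq hu hv hfuv

end HasFlatExpansion

section Coefficients

variable {d₁ d₂ : ℝ}

lemma hasFlatExpansion_funA (hd₁ : 0 < d₁) (hd₂ : 0 < d₂) (γ₁ γ₂ : ℝ) :
    HasFlatExpansion (funA d₁ d₂ γ₁ γ₂) (-(γ₁ + γ₂) / 2) := by
  have hP := flatLimit_sinh_mul_cosh_div_cosh hd₁ hd₂
  have hQ : FlatLimit (fun t => sinh (t * d₁) * cosh (t * d₂) / cosh (t * (d₁ + d₂))) (1 / 2) := by
    simpa only [add_comm d₂ d₁] using flatLimit_sinh_mul_cosh_div_cosh hd₂ hd₁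
  refine ⟨-(γ₂ * d₂), 0, _, _, (((hP.const_mul γ₂).add (hQ.const_mul γ₁)).const_mul (-1)).congr
    (fun _ => rfl) (by ring), FlatLimit.const 0, ?_⟩
  filter_upwards [eventually_ne_atTop 0] with t ht
  simp only [funA]
  field_simp
  ring

lemma hasFlatExpansion_funB (hd₁ : 0 < d₁) (hd₂ : 0 < d₂) (g γ₁ γ₂ : ℝ) :
    HasFlatExpansion (funB d₁ d₂ g γ₁ γ₂) (γ₂ ^ 2 * d₂ - g) := by
  refine ⟨0, _, _, _, ((flatLimit_tanh (add_pos hd₁ hd₂)).const_mul (γ₂ ^ 2 * d₂ - g)).congr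
    (fun _ => rfl) (mul_one _),
    (flatLimit_sinh_mul_sinh_div_cosh hd₁ hd₂).const_mul (γ₂ * (γ₁ - γ₂)), ?_⟩
  filter_upwards [eventually_gt_atTop 0] with t ht
  have hs := (sinh_pos_iff.2 (mul_pos ht (add_pos hd₁ hd₂))).ne'
  simp only [funB, tanh_eq_sinh_div_cosh]
  field_simp
  ring

lemma hasFlatExpansion_funC (hd₁ : 0 < d₁) (hd₂ : 0 < d₂) (g γ₁ γ₂ : ℝ) :
    HasFlatExpansion (funC d₁ d₂ g γ₁ γ₂) (g * (γ₂ * d₂)) := by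
  refine ⟨0, _, _, _, ((flatLimit_tanh (add_pos hd₁ hd₂)).const_mul (g * (γ₂ * d₂))).congr
    (fun _ => rfl) (mul_one _),
    (flatLimit_sinh_mul_sinh_div_cosh hd₁ hd₂).const_mul (g * (γ₁ - γ₂)), ?_⟩
  filter_upwards [eventually_gt_atTop 0] with t ht
  have hs := (sinh_pos_iff.2 (mul_pos ht (add_pos hd₁ hd₂))).ne'
  simp only [funC, tanh_eq_sinh_div_cosh]
  field_simp
  ring

end Coefficients

lemma cubic_deriv_at_root_eq {a b c r₁ r₂ r₃ : ℝ}
    (h : ∀ x : ℝ, x ^ 3 + a * x ^ 2 + b * x + c = (x - r₁) * (x - r₂) * (x - r₃)) :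
    3 * r₂ ^ 2 + 2 * a * r₂ + b = (r₂ - r₁) * (r₂ - r₃) := by
  have h₀ := h 0
  have h₁ := h 1
  have hm := h (-1)
  have ha : a = -(r₁ + r₂ + r₃) := by linear_combination (h₁ + hm) / 2 - h₀
  have hb : b = r₁ * r₂ + r₁ * r₃ + r₂ * r₃ := by linear_combination (h₁ - hm) / 2
  rw [ha, hb]
  ring

lemma lt_of_cubic_factor_neg {x r₁ r₂ r₃ : ℝ} (hx : 0 < x) (hr₃ : r₃ < 0) (hr₂₁ : r₂ < r₁)
    (h : (x - r₁) * (x - r₂) * (x - r₃) < 0) : r₂ < x := by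
  by_contra! hle
  have : 0 ≤ (x - r₁) * (x - r₂) * (x - r₃) :=
    mul_nonneg (mul_nonneg_of_nonpos_of_nonpos (by linarith) (by linarith)) (by linarith)
  linarith

lemma strictAntiOn_middle_root {ψ : ℝ → ℝ → ℝ} {Λ₁ Λ₂ Λ₃ : ℝ → ℝ} {S : Set ℝ}
    (hroots : ∀ t ∈ S, Λ₂ t < Λ₁ t ∧ 0 < Λ₂ t ∧ Λ₃ t < 0 ∧
      ∀ x, ψ t x = (x - Λ₁ t) * (x - Λ₂ t) * (x - Λ₃ t))
    (hψ : ∀ s ∈ S, StrictAntiOn (fun t => ψ t (Λ₂ s)) S) : StrictAntiOn Λ₂ S := by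
  intro s hs t ht hst
  obtain ⟨-, hs₂, -, hψs⟩ := hroots s hs
  obtain ⟨ht₂₁, -, ht₃, hψt⟩ := hroots t ht
  have hneg : ψ t (Λ₂ s) < 0 := by
    simpa [hψs] using hψ s hs hs ht hst
  rw [hψt] at hneg
  exact lt_of_cubic_factor_neg hs₂ ht₃ ht₂₁ hneg

lemma eventually_quadratic_neg {a b c : ℝ → ℝ} {α β γ : ℝ} (ha : Tendsto a atTop (𝓝 α))
    (hb : Tendsto b atTop (𝓝 β)) (hc : Tendsto c atTop (𝓝 γ)) (hγ : γ < 0) :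
    ∀ᶠ p in atTop ×ˢ 𝓝 0, a p.1 * p.2 ^ 2 + b p.1 * p.2 + c p.1 < 0 := by
  have h : Tendsto (fun p : ℝ × ℝ => a p.1 * p.2 ^ 2 + b p.1 * p.2 + c p.1) (atTop ×ˢ 𝓝 0)
      (𝓝 (α * 0 ^ 2 + β * 0 + γ)) :=
    (((ha.comp tendsto_fst).mul (tendsto_snd.pow 2)).add
      ((hb.comp tendsto_fst).mul tendsto_snd)).add (hc.comp tendsto_fst)
  exact h.eventually_lt_const (by simpa using hγ)

lemma exists_strictAntiOn_middle_root {A B C Λ₁ Λ₂ Λ₃ : ℝ → ℝ} {α β γ : ℝ}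
    (hA : ∀ᶠ t in atTop, DifferentiableAt ℝ A t) (hB : ∀ᶠ t in atTop, DifferentiableAt ℝ B t)
    (hC : ∀ᶠ t in atTop, DifferentiableAt ℝ C t)
    (hA' : Tendsto (fun t => t ^ 2 * deriv A t) atTop (𝓝 α))
    (hB' : Tendsto (fun t => t ^ 2 * deriv B t) atTop (𝓝 β))
    (hC' : Tendsto (fun t => t ^ 2 * deriv C t) atTop (𝓝 γ)) (hγ : γ < 0)
    (hroots : ∀ᶠ t in atTop, Λ₂ t < Λ₁ t ∧ 0 < Λ₂ t ∧ Λ₃ t < 0 ∧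
      ∀ x, x ^ 3 + A t * x ^ 2 + B t * x + C t = (x - Λ₁ t) * (x - Λ₂ t) * (x - Λ₃ t))
    (hΛ₂ : Tendsto Λ₂ atTop (𝓝 0)) :
    ∃ t₀ > (0 : ℝ), StrictAntiOn Λ₂ (Set.Ici t₀) := by
  obtain ⟨P, hP, Q, hQ, hPQ⟩ := eventually_prod_iff.1 (eventually_quadratic_neg hA' hB' hC' hγ)
  obtain ⟨t₀, ht₀⟩ := eventually_atTop.1 (hA.and <| hB.and <| hC.and <| hP.and <|
    (hΛ₂.eventually hQ).and <| hroots.and <| eventually_gt_atTop 0)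
  have ht₀_pos : 0 < t₀ := by obtain ⟨-, -, -, -, -, -, h⟩ := ht₀ t₀ le_rfl; exact h
  refine ⟨t₀, ht₀_pos, strictAntiOn_middle_root (fun t ht => (ht₀ t ht).2.2.2.2.2.1) ?_⟩
  intro s hs
  have hQs : Q (Λ₂ s) := (ht₀ s hs).2.2.2.2.1
  have hderiv : ∀ r ∈ Set.Ici t₀, HasDerivAt
      (fun r => Λ₂ s ^ 3 + A r * Λ₂ s ^ 2 + B r * Λ₂ s + C r)
      (deriv A r * Λ₂ s ^ 2 + deriv B r * Λ₂ s + deriv C r) r := by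
    intro r hr
    obtain ⟨hAr, hBr, hCr, -⟩ := ht₀ r hr
    exact ((((hAr.hasDerivAt.mul_const (Λ₂ s ^ 2)).fun_add
      (hBr.hasDerivAt.mul_const (Λ₂ s))).fun_add hCr.hasDerivAt).const_add (Λ₂ s ^ 3))
      |>.congr_of_eventuallyEq (.of_forall fun _ => by ring)
  refine strictAntiOn_of_hasDerivWithinAt_neg (convex_Ici t₀)
    (fun r hr => (hderiv r hr).continuousAt.continuousWithinAt)
    (fun r hr => (hderiv r (interior_subset hr)).hasDerivWithinAt) fun r hr => ?_
  have hPr : P r := (ht₀ r (interior_subset hr)).2.2.2.1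
  refine neg_of_mul_neg_right (a := r ^ 2) ?_ (sq_nonneg r)
  linear_combination hPQ hPr hQs

theorem middle_root_properties_general
    (d₁ d₂ g γ₁ γ₂ : ℝ) (hd₁ : 0 < d₁) (hd₂ : 0 < d₂) (hg : 0 < g)
    (hγ₂ : 0 < γ₂) (Λ₁ Λ₂ Λ₃ : ℝ → ℝ)
    (hroots : ∀ᶠ t in atTop,
      Λ₃ t < Λ₂ t ∧ Λ₂ t < Λ₁ t ∧ 0 < Λ₂ t ∧ Λ₃ t < 0 ∧
      ∀ Λ : ℝ, phi d₁ d₂ g γ₁ γ₂ t Λ = (Λ - Λ₁ t) * (Λ - Λ₂ t) * (Λ - Λ₃ t))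
    (hlim2 : Tendsto Λ₂ atTop (nhds 0)) :
    (∀ᶠ t in atTop,
      3 * Λ₂ t ^ 2 + 2 * funA d₁ d₂ γ₁ γ₂ t * Λ₂ t + funB d₁ d₂ g γ₁ γ₂ t < 0) ∧
    Tendsto (fun t : ℝ =>
        t ^ 2 * (deriv (funA d₁ d₂ γ₁ γ₂) t * Λ₂ t ^ 2
          + deriv (funB d₁ d₂ g γ₁ γ₂) t * Λ₂ t + deriv (funC d₁ d₂ g γ₁ γ₂) t))
      atTop (nhds (-(g * (γ₂ * d₂)))) ∧
    ∃ t₀ > (0 : ℝ), StrictAntiOn Λ₂ (Set.Ici t₀) := by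
  have hA := hasFlatExpansion_funA hd₁ hd₂ γ₁ γ₂
  have hB := hasFlatExpansion_funB hd₁ hd₂ g γ₁ γ₂
  have hC := hasFlatExpansion_funC hd₁ hd₂ g γ₁ γ₂
  refine ⟨?_, ?_, ?_⟩
  · filter_upwards [hroots] with t ⟨h₃₂, h₂₁, _, _, hfac⟩
    rw [cubic_deriv_at_root_eq hfac]
    exact mul_neg_of_neg_of_pos (by linarith) (by linarith)
  · have h := ((hA.tendsto_sq_mul_deriv.mul (hlim2.pow 2)).add
      (hB.tendsto_sq_mul_deriv.mul hlim2)).add hC.tendsto_sq_mul_deriv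
    rw [zero_pow two_ne_zero, mul_zero, mul_zero, zero_add, zero_add] at h
    exact h.congr fun t => by ring
  · exact exists_strictAntiOn_middle_root hA.eventually_differentiableAt
      hB.eventually_differentiableAt hC.eventually_differentiableAt hA.tendsto_sq_mul_deriv
      hB.tendsto_sq_mul_deriv hC.tendsto_sq_mul_deriv (neg_neg_of_pos (by positivity))
      (hroots.mono fun t ⟨_, h₂₁, h₂, h₃, hfac⟩ => ⟨h₂₁, h₂, h₃, hfac⟩) hlim2

/-- at the middle root `Λ₂`, `∂Λφ(t,Λ₂(t)) < 0` eventually,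
`t²·∂tφ(t,Λ₂(t)) → −gγ₂d₂`, and `Λ₂` is eventually strictly decreasing. -/
theorem middle_root_properties
    (d₁ d₂ g γ₁ γ₂ : ℝ) (hd₁ : 0 < d₁) (hd₂ : 0 < d₂) (hg : 0 < g)
    (hγ₂ : 0 < γ₂) (hne : γ₁ ≠ γ₂) (Λ₁ Λ₂ Λ₃ : ℝ → ℝ)
    (hroots : ∀ᶠ t in atTop,
      Λ₃ t < Λ₂ t ∧ Λ₂ t < Λ₁ t ∧ 0 < Λ₂ t ∧ Λ₃ t < 0 ∧
      ∀ Λ : ℝ, phi d₁ d₂ g γ₁ γ₂ t Λ = (Λ - Λ₁ t) * (Λ - Λ₂ t) * (Λ - Λ₃ t))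
    (hlim1 : Tendsto Λ₁ atTop (nhds (γ₂ * d₂)))
    (hlim2 : Tendsto Λ₂ atTop (nhds 0))
    (hlim3 : Tendsto Λ₃ atTop (nhds 0)) :
    (∀ᶠ t in atTop,
      3 * Λ₂ t ^ 2 + 2 * funA d₁ d₂ γ₁ γ₂ t * Λ₂ t + funB d₁ d₂ g γ₁ γ₂ t < 0) ∧
    Tendsto (fun t : ℝ =>
        t ^ 2 * (deriv (funA d₁ d₂ γ₁ γ₂) t * Λ₂ t ^ 2
          + deriv (funB d₁ d₂ g γ₁ γ₂) t * Λ₂ t + deriv (funC d₁ d₂ g γ₁ γ₂) t))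
      atTop (nhds (-(g * (γ₂ * d₂)))) ∧
    ∃ t₀ > (0 : ℝ), StrictAntiOn Λ₂ (Set.Ici t₀) :=
  middle_root_properties_general d₁ d₂ g γ₁ γ₂ hd₁ hd₂ hg hγ₂ Λ₁ Λ₂ Λ₃ hroots hlim2
end

section
/- Assume γ₂ > 0, γ₁ ≠ γ₂, and let Λ₂(t) denote the middle real root of φ(t,·) for large t (so Λ₂(t) > 0 and Λ₂(t) → 0 as t → ∞). Then −m²¹(t,Λ₂(t))/m²²(t,Λ₂(t)) → −∞ as t → ∞, where m²¹(t,Λ) := γ₂ − γ₁ + (Λ − γ₂d₂)·[t/tanh(t·d₁) + t/tanh(t·d₂)] and m²²(t,Λ) := −Λ·t/sinh(t·d₂). -/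
open Real Filter Asymptotics

/-! Since `t / tanh (t d) ≥ t`, the bracket in `m²¹` tends to `+∞` while its coefficient
`Λ₂ − γ₂ d₂` tends to `−γ₂ d₂ < 0`, so `m²¹ → −∞`. Moreover `−m²¹/m²² = m²¹ · sinh (t d₂) / (t Λ₂)`,
and `sinh x ≥ x` gives `sinh (t d₂) / (t Λ₂) ≥ d₂ / Λ₂ → +∞` because `Λ₂ → 0⁺`. -/

lemma tendsto_div_tanh_mul_atTop {d : ℝ} (hd : 0 < d) :
    Tendsto (fun t : ℝ => t / tanh (t * d)) atTop atTop := by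
  refine tendsto_atTop_mono' atTop ?_ tendsto_id
  filter_upwards [eventually_gt_atTop 0] with t ht
  have htanh : 0 < tanh (t * d) := by
    rw [tanh_eq_sinh_div_cosh]
    exact div_pos (sinh_pos_iff.mpr (by positivity)) (cosh_pos _)
  exact (le_div_iff₀ htanh).mpr (mul_le_of_le_one_right ht.le (tanh_lt_one _).le)

lemma tendsto_m21_atBot {d₁ d₂ γ₁ γ₂ c : ℝ} (hd₁ : 0 < d₁) (hd₂ : 0 < d₂) {Λ : ℝ → ℝ}
    (hΛ : Tendsto Λ atTop (nhds c)) (hc : c < γ₂ * d₂) :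
    Tendsto (fun t => m21 d₁ d₂ γ₁ γ₂ t (Λ t)) atTop atBot :=
  tendsto_atBot_add_const_left _ _ <|
    ((hΛ.sub_const _).neg_mul_atTop (sub_neg.mpr hc)
      ((tendsto_div_tanh_mul_atTop hd₁).atTop_add_atTop (tendsto_div_tanh_mul_atTop hd₂)))

lemma tendsto_sinh_mul_div_mul_atTop {d : ℝ} (hd : 0 < d) {Λ : ℝ → ℝ}
    (hΛ : Tendsto Λ atTop (nhdsWithin 0 (Set.Ioi 0))) :
    Tendsto (fun t => sinh (t * d) / (t * Λ t)) atTop atTop := by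
  have hinv : Tendsto (fun t => d * (Λ t)⁻¹) atTop atTop :=
    (tendsto_inv_nhdsGT_zero.comp hΛ).const_mul_atTop hd
  refine tendsto_atTop_mono' atTop ?_ hinv
  filter_upwards [eventually_gt_atTop 0, hΛ self_mem_nhdsWithin] with t ht hΛt
  have hsinh : t * d ≤ sinh (t * d) := self_le_sinh_iff.mpr (by positivity)
  calc d * (Λ t)⁻¹ = t * d / (t * Λ t) := by field_simp
    _ ≤ sinh (t * d) / (t * Λ t) := by gcongr; exact (mul_pos ht hΛt).le

lemma neg_m21_div_m22 (d₁ d₂ γ₁ γ₂ t Λ : ℝ) :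
    -m21 d₁ d₂ γ₁ γ₂ t Λ / m22 d₂ t Λ = m21 d₁ d₂ γ₁ γ₂ t Λ * (sinh (t * d₂) / (t * Λ)) := by
  rw [m22, div_div_eq_mul_div]
  ring

theorem ratio_m21_m22_middle_root_general
    (d₁ d₂ g γ₁ γ₂ : ℝ) (hd₁ : 0 < d₁) (hd₂ : 0 < d₂)
    (hγ₂ : 0 < γ₂) (Λ₁ Λ₂ Λ₃ : ℝ → ℝ)
    (hroots : ∀ᶠ t in atTop,
      Λ₃ t < Λ₂ t ∧ Λ₂ t < Λ₁ t ∧ 0 < Λ₂ t ∧ Λ₃ t < 0 ∧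
      ∀ Λ : ℝ, phi d₁ d₂ g γ₁ γ₂ t Λ = (Λ - Λ₁ t) * (Λ - Λ₂ t) * (Λ - Λ₃ t))
    (hlim2 : Tendsto Λ₂ atTop (nhds 0)) :
    Tendsto (fun t : ℝ => -(m21 d₁ d₂ γ₁ γ₂ t (Λ₂ t)) / m22 d₂ t (Λ₂ t)) atTop atBot := by
  have hΛ₂ : Tendsto Λ₂ atTop (nhdsWithin 0 (Set.Ioi 0)) :=
    tendsto_nhdsWithin_iff.mpr ⟨hlim2, hroots.mono fun _ h => h.2.2.1⟩
  simp only [neg_m21_div_m22]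
  exact (tendsto_m21_atBot hd₁ hd₂ hlim2 (by positivity)).atBot_mul_atTop₀
    (tendsto_sinh_mul_div_mul_atTop hd₂ hΛ₂)

/-- along the middle root `Λ₂`, `−m²¹/m²² → −∞` as `t → ∞`. -/
theorem ratio_m21_m22_middle_root
    (d₁ d₂ g γ₁ γ₂ : ℝ) (hd₁ : 0 < d₁) (hd₂ : 0 < d₂) (hg : 0 < g)
    (hγ₂ : 0 < γ₂) (hne : γ₁ ≠ γ₂) (Λ₁ Λ₂ Λ₃ : ℝ → ℝ)
    (hroots : ∀ᶠ t in atTop,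
      Λ₃ t < Λ₂ t ∧ Λ₂ t < Λ₁ t ∧ 0 < Λ₂ t ∧ Λ₃ t < 0 ∧
      ∀ Λ : ℝ, phi d₁ d₂ g γ₁ γ₂ t Λ = (Λ - Λ₁ t) * (Λ - Λ₂ t) * (Λ - Λ₃ t))
    (hlim2 : Tendsto Λ₂ atTop (nhds 0))
    (hlim3 : Tendsto Λ₃ atTop (nhds 0)) :
    Tendsto (fun t : ℝ => -(m21 d₁ d₂ γ₁ γ₂ t (Λ₂ t)) / m22 d₂ t (Λ₂ t)) atTop atBot :=
  ratio_m21_m22_middle_root_general d₁ d₂ g γ₁ γ₂ hd₁ hd₂ hγ₂ Λ₁ Λ₂ Λ₃ hroots hlim2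
end
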